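/- arXiv:1709.09933 — 6 statements merged into one kernel-verified Lean document; each statement's English description precedes it below -/
import Mathlib

section
/- Let X be a Fréchet space with a Schauder basis (e_n)_{n≥0} and seminorms (p_j). Then X possesses a continuous norm if and only if there exists j ≥ 1 such that p_j(e_n) > 0 for every n ≥ 0. -/
/-!
For a Schauder basis, the seminorms `q_j x = sup_N p_j (S_N x)`, with `S_N` the `N`-th partial sum
of the expansion, dominate `p_j` and are closable: if `w` is `q`-Cauchy and tends to `0` in `X`, its
coefficients converge, the partial sums converge uniformly in `N`, and the limit expansion must be
that of `0`. A Baire category argument, as in the open mapping theorem, turns closability into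
continuity. Since `|x_n| p_j (e_n) ≤ 2 q_j x`, the seminorm `q_j` is a norm as soon as no `p_j (e_n)`
vanishes. Conversely, a continuous norm is dominated by a multiple of a single `p_J` (the family is
increasing), so `p_J` cannot vanish at a nonzero vector, in particular at a basis vector.
-/

open Filter Finset Topology
open scoped Pointwise

theorem WithSeminorms.baireSpace {𝕜 X ι : Type*} [NontriviallyNormedField 𝕜] [AddCommGroup X]
    [Module 𝕜 X] [UniformSpace X] [IsUniformAddGroup X] [CompleteSpace X] [Countable ι]
    {p : SeminormFamily 𝕜 X ι} (hp : WithSeminorms p) : BaireSpace X := by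
  have := hp.firstCountableTopology
  have : (uniformity X).IsCountablyGenerated := IsUniformAddGroup.uniformity_countably_generated
  let := UniformSpace.pseudoMetricSpace X
  exact BaireSpace.of_completelyPseudoMetrizable

theorem exists_seq_sub_mem_of_mem_closure {G : Type*} [AddCommGroup G] [TopologicalSpace G]
    [IsTopologicalAddGroup G] {B : ℕ → Set G} (hB : ∀ m, closure (B (m + 1)) ∈ 𝓝 (0 : G))
    {x : G} (hx : x ∈ closure (B 0)) :
    ∃ w : ℕ → G, w 0 = x ∧ ∀ K, w K ∈ closure (B K) ∧ w K - w (K + 1) ∈ B K := by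
  have step : ∀ m z, ∃ v, z ∈ closure (B m) → v ∈ B m ∧ z - v ∈ closure (B (m + 1)) := by
    intro m z
    by_cases hz : z ∈ closure (B m)
    · have : {v | z - v ∈ closure (B (m + 1))} ∈ 𝓝 z :=
        (continuous_const.sub continuous_id).continuousAt.preimage_mem_nhds (by simpa using hB m)
      obtain ⟨v, hv, hvB⟩ := mem_closure_iff_nhds.1 hz _ this
      exact ⟨v, fun _ => ⟨hvB, hv⟩⟩
    · exact ⟨0, fun h => absurd h hz⟩
  choose v hv using step
  let w : ℕ → G := fun K => Nat.rec x (fun K wK => wK - v K wK) K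
  have hw : ∀ K, w K ∈ closure (B K) := by
    intro K
    induction K with
    | zero => exact hx
    | succ K ih => exact (hv K (w K) ih).2
  exact ⟨w, rfl, fun K => ⟨hw K, by
    convert (hv K (w K) (hw K)).1 using 1; exact sub_sub_cancel _ _⟩⟩

section

variable {X : Type*} [AddCommGroup X] [Module ℝ X]

namespace SeminormFamily

def IsCauchy (Q : SeminormFamily ℝ X ℕ) (w : ℕ → X) : Prop :=
  ∀ j, ∀ ε > 0, ∃ L, ∀ K ≥ L, ∀ K' ≥ L, Q j (w K - w K') ≤ ε

variable {Q : SeminormFamily ℝ X ℕ}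

theorem sub_le_of_sub_succ_le (hmono : Monotone Q) {w : ℕ → X} {m₀ : ℕ}
    (hw : ∀ K, Q (m₀ + K) (w K - w (K + 1)) ≤ (1 / 2) ^ (m₀ + K)) {i a b : ℕ}
    (hia : i ≤ m₀ + a) (hab : a ≤ b) :
    Q i (w a - w b) ≤ 2 * (1 / 2) ^ (m₀ + a) - 2 * (1 / 2) ^ (m₀ + b) := by
  induction b, hab using Nat.le_induction with
  | base => simp
  | succ b hab ih =>
    calc Q i (w a - w (b + 1)) ≤ Q i (w a - w b) + Q i (w b - w (b + 1)) := by
          simpa using map_add_le_add (Q i) (w a - w b) (w b - w (b + 1))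
      _ ≤ _ := add_le_add ih ((hmono (by omega : i ≤ m₀ + b) _).trans (hw b))
      _ = _ := by rw [← add_assoc, pow_succ]; ring

theorem isCauchy_of_sub_succ_le (hmono : Monotone Q) {w : ℕ → X} {m₀ : ℕ}
    (hw : ∀ K, Q (m₀ + K) (w K - w (K + 1)) ≤ (1 / 2) ^ (m₀ + K)) : Q.IsCauchy w := by
  intro j ε hε
  obtain ⟨L, hL⟩ := exists_pow_lt_of_lt_one (half_pos hε) (by norm_num : (1 / 2 : ℝ) < 1)
  have hle : ∀ a b, max j L ≤ a → a ≤ b → Q j (w a - w b) ≤ ε := fun a b ha hab => by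
    have : ((1 : ℝ) / 2) ^ (m₀ + a) ≤ (1 / 2) ^ L :=
      pow_le_pow_of_le_one (by norm_num) (by norm_num) (by omega)
    linarith [sub_le_of_sub_succ_le hmono hw (by omega : j ≤ m₀ + a) hab,
      pow_pos (by norm_num : (0 : ℝ) < 1 / 2) (m₀ + b)]
  refine ⟨max j L, fun K hK K' hK' => ?_⟩
  rcases le_total K K' with h | h
  · exact hle K K' hK h
  · rw [← map_neg_eq_map, neg_sub]; exact hle K' K hK' h

end SeminormFamily

variable [TopologicalSpace X]

theorem Seminorm.closure_closedBall_zero_mem_nhds [IsTopologicalAddGroup X]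
    [ContinuousConstSMul ℝ X] [BaireSpace X] (P : Seminorm ℝ X) {r : ℝ} (hr : 0 < r) :
    closure (P.closedBall 0 r) ∈ 𝓝 (0 : X) := by
  have hcover : ⋃ n : ℕ, closure (P.closedBall (0 : X) (n + 1)) = Set.univ :=
    Set.eq_univ_of_forall fun x => Set.mem_iUnion.2 ⟨⌈P x⌉₊, subset_closure <| by
      rw [P.mem_closedBall_zero]; linarith [Nat.le_ceil (P x)]⟩
  obtain ⟨n, x₀, hx₀⟩ := nonempty_interior_of_iUnion_of_closed (fun _ => isClosed_closure) hcover
  set R : ℝ := n + 1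
  have hneg : -x₀ ∈ closure (P.closedBall 0 R) :=
    map_mem_closure continuous_neg (interior_subset hx₀) fun y hy => by
      simpa only [P.mem_closedBall_zero, map_neg_eq_map] using hy
  have h2R : closure (P.closedBall 0 (R + R)) ∈ 𝓝 (0 : X) := by
    have : {u : X | x₀ + u ∈ interior (closure (P.closedBall 0 R))} ∈ 𝓝 0 :=
      (continuous_const_add x₀).continuousAt.preimage_mem_nhds
        (by simpa using isOpen_interior.mem_nhds hx₀)
    refine mem_of_superset this fun u hu => ?_
    simpa using map_mem_closure₂ continuous_add (interior_subset hu) hneg fun a ha b hb => by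
      rw [P.mem_closedBall_zero] at ha hb ⊢
      exact (map_add_le_add P a b).trans (add_le_add ha hb)
  have hc : r / (R + R) ≠ 0 := by positivity
  have hscale : P.closedBall 0 r = (r / (R + R)) • P.closedBall 0 (R + R) := by
    rw [Seminorm.smul_closedBall_zero (norm_pos_iff.2 hc), Real.norm_eq_abs,
      abs_of_pos (by positivity), div_mul_cancel₀ _ (by positivity)]
  rwa [hscale, closure_smul₀' hc, set_smul_mem_nhds_zero_iff hc]

namespace SeminormFamily

def IsClosable (Q : SeminormFamily ℝ X ℕ) : Prop :=
  ∀ w : ℕ → X, Tendsto w atTop (𝓝 0) → Q.IsCauchy w → ∀ j, Tendsto (fun K => Q j (w K)) atTop (𝓝 0)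

variable [IsTopologicalAddGroup X] [ContinuousConstSMul ℝ X] [BaireSpace X]
  {p Q : SeminormFamily ℝ X ℕ}

theorem IsClosable.le_of_mem_closure (hQ : Q.IsClosable) (hmono : Monotone Q)
    (hp : WithSeminorms p) (hpQ : p ≤ Q) {i m₀ : ℕ} (him : i ≤ m₀) {x : X}
    (hx : x ∈ closure ((Q m₀).closedBall 0 ((1 / 2) ^ m₀))) : Q i x ≤ 2 * (1 / 2) ^ m₀ := by
  obtain ⟨w, rfl, hw⟩ := exists_seq_sub_mem_of_mem_closure
    (B := fun K => (Q (m₀ + K)).closedBall 0 ((1 / 2) ^ (m₀ + K)))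
    (fun K => (Q _).closure_closedBall_zero_mem_nhds (by positivity)) hx
  have hstep : ∀ K, Q (m₀ + K) (w K - w (K + 1)) ≤ (1 / 2) ^ (m₀ + K) :=
    fun K => (Q _).mem_closedBall_zero.1 (hw K).2
  have hw0 : Tendsto w atTop (𝓝 0) := by
    rw [hp.tendsto_nhds]
    intro j ε hε
    obtain ⟨L, hL⟩ := exists_pow_lt_of_lt_one hε (by norm_num : (1 / 2 : ℝ) < 1)
    filter_upwards [eventually_ge_atTop (max j L)] with K hK
    have hpw : p j (w K) ≤ (1 / 2) ^ (m₀ + K) :=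
      closure_minimal (fun y hy => (hpQ j y).trans ((hmono (by omega : j ≤ m₀ + K) y).trans
        ((Q _).mem_closedBall_zero.1 hy))) (isClosed_le (hp.continuous_seminorm j)
        continuous_const) (hw K).1
    have : ((1 : ℝ) / 2) ^ (m₀ + K) ≤ (1 / 2) ^ L :=
      pow_le_pow_of_le_one (by norm_num) (by norm_num) (by omega)
    rw [sub_zero]; linarith
  have hlim := (hQ w hw0 (isCauchy_of_sub_succ_le hmono hstep) i).const_add (2 * (1 / 2) ^ m₀)
  rw [add_zero] at hlim
  refine ge_of_tendsto' hlim fun K => ?_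
  calc Q i (w 0) ≤ Q i (w 0 - w K) + Q i (w K) := by
        simpa using map_add_le_add (Q i) (w 0 - w K) (w K)
    _ ≤ 2 * (1 / 2) ^ m₀ + Q i (w K) := by
        have h0 := sub_le_of_sub_succ_le hmono hstep (a := 0) (by omega) (Nat.zero_le K)
        rw [Nat.add_zero] at h0
        linarith [pow_pos (by norm_num : (0 : ℝ) < 1 / 2) (m₀ + K)]

theorem IsClosable.continuous (hQ : Q.IsClosable) (hmono : Monotone Q) (hp : WithSeminorms p)
    (hpQ : p ≤ Q) (j : ℕ) : Continuous (Q j) := by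
  refine Seminorm.continuous_of_forall' fun r hr => ?_
  obtain ⟨m, hm⟩ := exists_pow_lt_of_lt_one (half_pos hr) (by norm_num : (1 / 2 : ℝ) < 1)
  refine mem_of_superset
    ((Q (max j m)).closure_closedBall_zero_mem_nhds (r := (1 / 2) ^ max j m) (by positivity))
    fun x hx => (Q j).mem_closedBall_zero.2 ?_
  have : ((1 : ℝ) / 2) ^ max j m ≤ (1 / 2) ^ m :=
    pow_le_pow_of_le_one (by norm_num) (by norm_num) (le_max_right _ _)
  linarith [hQ.le_of_mem_closure hmono hp hpQ (le_max_left j m) hx]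

end SeminormFamily

def IsSchauderBasis (e : ℕ → X) : Prop :=
  ∀ x : X, ∃! a : ℕ → ℝ, Tendsto (fun N => ∑ n ∈ range N, a n • e n) atTop (𝓝 x)

namespace IsSchauderBasis

variable {e : ℕ → X}

theorem eq_zero_of_tendsto (hb : IsSchauderBasis e) {a : ℕ → ℝ}
    (ha : Tendsto (fun N => ∑ n ∈ range N, a n • e n) atTop (𝓝 0)) : a = 0 :=
  (hb 0).unique ha (by simpa using tendsto_const_nhds)

theorem ne_zero (hb : IsSchauderBasis e) (n : ℕ) : e n ≠ 0 := fun hn => by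
  have := congr_fun (hb.eq_zero_of_tendsto (a := Pi.single n 1) ?_) n
  · simp at this
  · refine tendsto_const_nhds.congr fun N => (sum_eq_zero fun m _ => ?_).symm
    by_cases hm : m = n <;> simp [hm, hn]

section Coefficients

variable [ContinuousAdd X] [ContinuousConstSMul ℝ X]

noncomputable def coeff (hb : IsSchauderBasis e) : X →ₗ[ℝ] ℕ → ℝ where
  toFun x := (hb x).exists.choose
  map_add' x y := (hb (x + y)).unique (hb (x + y)).exists.choose_spec <| by
    simpa only [Pi.add_apply, add_smul, sum_add_distrib] using
      (hb x).exists.choose_spec.add (hb y).exists.choose_spec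
  map_smul' c x := (hb (c • x)).unique (hb (c • x)).exists.choose_spec <| by
    simpa only [Pi.smul_apply, smul_eq_mul, mul_smul, ← smul_sum, RingHom.id_apply] using
      (hb x).exists.choose_spec.const_smul c

theorem tendsto_coeff (hb : IsSchauderBasis e) (x : X) :
    Tendsto (fun N => ∑ n ∈ range N, hb.coeff x n • e n) atTop (𝓝 x) :=
  (hb x).exists.choose_spec

noncomputable def proj (hb : IsSchauderBasis e) (N : ℕ) : X →ₗ[ℝ] X :=
  ∑ n ∈ range N, (LinearMap.proj n ∘ₗ hb.coeff).smulRight (e n)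

theorem proj_apply (hb : IsSchauderBasis e) (N : ℕ) (x : X) :
    hb.proj N x = ∑ n ∈ range N, hb.coeff x n • e n := by
  simp [proj]

theorem tendsto_proj (hb : IsSchauderBasis e) (x : X) :
    Tendsto (fun N => hb.proj N x) atTop (𝓝 x) := by
  simpa only [proj_apply] using hb.tendsto_coeff x

-- A supremum in the lattice of seminorms; it is the pointwise one when `P` is continuous.
noncomputable def supSeminorm (hb : IsSchauderBasis e) (P : Seminorm ℝ X) : Seminorm ℝ X :=
  ⨆ N, P.comp (hb.proj N)

variable {P : Seminorm ℝ X}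

theorem bddAbove_range_apply_proj (hb : IsSchauderBasis e) (hP : Continuous P) (x : X) :
    BddAbove (Set.range fun N => P (hb.proj N x)) :=
  ((hP.tendsto x).comp (hb.tendsto_proj x)).bddAbove_range

theorem supSeminorm_apply (hb : IsSchauderBasis e) (hP : Continuous P) (x : X) :
    hb.supSeminorm P x = ⨆ N, P (hb.proj N x) := by
  rw [supSeminorm, Seminorm.coe_iSup_eq
    (Seminorm.bddAbove_range_iff.2 (hb.bddAbove_range_apply_proj hP)), iSup_apply]
  rfl

theorem le_supSeminorm (hb : IsSchauderBasis e) (hP : Continuous P) (x : X) (N : ℕ) :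
    P (hb.proj N x) ≤ hb.supSeminorm P x := by
  rw [hb.supSeminorm_apply hP]
  exact le_ciSup (hb.bddAbove_range_apply_proj hP x) N

theorem supSeminorm_le (hb : IsSchauderBasis e) (hP : Continuous P) {x : X} {c : ℝ}
    (h : ∀ N, P (hb.proj N x) ≤ c) : hb.supSeminorm P x ≤ c := by
  rw [hb.supSeminorm_apply hP]
  exact ciSup_le h

theorem le_supSeminorm_self (hb : IsSchauderBasis e) (hP : Continuous P) (x : X) :
    P x ≤ hb.supSeminorm P x :=
  le_of_tendsto ((hP.tendsto x).comp (hb.tendsto_proj x))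
    (Eventually.of_forall (hb.le_supSeminorm hP x))

theorem supSeminorm_mono (hb : IsSchauderBasis e) {P' : Seminorm ℝ X} (hP : Continuous P)
    (hP' : Continuous P') (h : P ≤ P') : hb.supSeminorm P ≤ hb.supSeminorm P' := fun x =>
  hb.supSeminorm_le hP fun N => (h _).trans (hb.le_supSeminorm hP' x N)

theorem abs_coeff_mul_le (hb : IsSchauderBasis e) (hP : Continuous P) (x : X) (n : ℕ) :
    |hb.coeff x n| * P (e n) ≤ 2 * hb.supSeminorm P x := by
  have hsucc : hb.proj (n + 1) x - hb.proj n x = hb.coeff x n • e n := by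
    simp [proj_apply, sum_range_succ]
  calc |hb.coeff x n| * P (e n) = P (hb.proj (n + 1) x - hb.proj n x) := by
        rw [hsucc, map_smul_eq_mul, Real.norm_eq_abs]
    _ ≤ P (hb.proj (n + 1) x) + P (hb.proj n x) := map_sub_le_add _ _ _
    _ ≤ 2 * hb.supSeminorm P x := by
        linarith [hb.le_supSeminorm hP x (n + 1), hb.le_supSeminorm hP x n]

theorem supSeminorm_pos [T2Space X] (hb : IsSchauderBasis e) (hP : Continuous P)
    (he : ∀ n, 0 < P (e n)) {x : X} (hx : x ≠ 0) : 0 < hb.supSeminorm P x := by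
  refine (apply_nonneg _ x).lt_of_ne' fun h0 => hx ?_
  have hcoeff : hb.coeff x = 0 := funext fun n => by
    have := hb.abs_coeff_mul_le hP x n
    rw [h0, mul_zero] at this
    exact abs_nonpos_iff.1 (by nlinarith [abs_nonneg (hb.coeff x n), he n])
  exact tendsto_nhds_unique (hb.tendsto_coeff x) (by simp [hcoeff])

theorem cauchySeq_coeff (hb : IsSchauderBasis e) {p : SeminormFamily ℝ X ℕ} {w : ℕ → X}
    (hw : SeminormFamily.IsCauchy (fun j => hb.supSeminorm (p j)) w) {j n : ℕ}
    (hpc : Continuous (p j)) (hjn : 0 < p j (e n)) :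
    CauchySeq fun K => hb.coeff (w K) n := by
  rw [Metric.cauchySeq_iff']
  intro ε hε
  obtain ⟨L, hL⟩ := hw j (ε * p j (e n) / 4) (by positivity)
  refine ⟨L, fun K hK => ?_⟩
  have h := hb.abs_coeff_mul_le hpc (w K - w L) n
  rw [map_sub, Pi.sub_apply] at h
  rw [Real.dist_eq]
  refine lt_of_mul_lt_mul_right ?_ hjn.le
  linarith [hL K hK L le_rfl, mul_pos hε hjn]

end Coefficients

variable [IsTopologicalAddGroup X] [ContinuousSMul ℝ X]

theorem sum_sub_proj_le_of_tendsto_coeff (hb : IsSchauderBasis e) {P : Seminorm ℝ X}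
    (hP : Continuous P) {w : ℕ → X} {b : ℕ → ℝ}
    (hb_lim : ∀ n, Tendsto (fun K => hb.coeff (w K) n) atTop (𝓝 (b n))) {ε : ℝ} {L : ℕ}
    (hL : ∀ K ≥ L, ∀ K' ≥ L, hb.supSeminorm P (w K - w K') ≤ ε) :
    ∀ K ≥ L, ∀ N, P (∑ n ∈ range N, b n • e n - hb.proj N (w K)) ≤ ε := by
  intro K hK N
  have hproj : Tendsto (fun K' => hb.proj N (w K')) atTop (𝓝 (∑ n ∈ range N, b n • e n)) := by
    simpa only [proj_apply] using tendsto_finsetSum _ fun n _ => (hb_lim n).smul_const (e n)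
  refine le_of_tendsto ((hP.tendsto _).comp (hproj.sub_const (hb.proj N (w K)))) ?_
  filter_upwards [eventually_ge_atTop L] with K' hK'
  rw [Function.comp_apply, ← map_sub]
  exact (hb.le_supSeminorm hP _ N).trans (hL K' hK' K hK)

theorem isClosable_supSeminorm [T1Space X] (hb : IsSchauderBasis e) {p : SeminormFamily ℝ X ℕ}
    (hp : WithSeminorms p) : SeminormFamily.IsClosable fun j => hb.supSeminorm (p j) := by
  intro w hw0 hw j
  have hpc := hp.continuous_seminorm
  have hlim : ∀ n, ∃ b, Tendsto (fun K => hb.coeff (w K) n) atTop (𝓝 b) := fun n => by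
    obtain ⟨i, hi⟩ := hp.separating_of_T1 (e n) (hb.ne_zero n)
    exact cauchySeq_tendsto_of_complete
      (hb.cauchySeq_coeff hw (hpc i) ((apply_nonneg _ _).lt_of_ne' hi))
  choose b hb_lim using hlim
  set z : ℕ → X := fun N => ∑ n ∈ range N, b n • e n
  have hunif : ∀ i, ∀ ε > 0, ∃ L, ∀ K ≥ L, ∀ N, p i (z N - hb.proj N (w K)) ≤ ε :=
    fun i ε hε => (hw i ε hε).imp fun _ => hb.sum_sub_proj_le_of_tendsto_coeff (hpc i) hb_lim
  -- uniform convergence in `N` allows exchanging the limits in `K` and in `N`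
  have hz : Tendsto z atTop (𝓝 0) := by
    rw [hp.tendsto_nhds]
    intro i ε hε
    obtain ⟨L, hL⟩ := hunif i (ε / 3) (by positivity)
    obtain ⟨K, hKL, hK⟩ := ((eventually_ge_atTop L).and
      ((hp.tendsto_nhds w 0).1 hw0 i (ε / 3) (by positivity))).exists
    filter_upwards [(hp.tendsto_nhds _ _).1 (hb.tendsto_proj (w K)) i (ε / 3) (by positivity)]
      with N hN
    calc p i (z N - 0)
        = p i ((z N - hb.proj N (w K)) + (hb.proj N (w K) - w K) + (w K - 0)) := by
          congr 1; abel
      _ ≤ p i (z N - hb.proj N (w K)) + p i (hb.proj N (w K) - w K) + p i (w K - 0) :=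
          (map_add_le_add _ _ _).trans (add_le_add_left (map_add_le_add _ _ _) _)
      _ < ε := by linarith [hL K hKL N]
  have hb0 : b = 0 := hb.eq_zero_of_tendsto hz
  rw [Metric.tendsto_atTop]
  intro ε hε
  obtain ⟨L, hL⟩ := hunif j (ε / 2) (by positivity)
  refine ⟨L, fun K hK => ?_⟩
  have : hb.supSeminorm (p j) (w K) ≤ ε / 2 := hb.supSeminorm_le (hpc j) fun N => by
    simpa [z, hb0] using hL K hK N
  rw [Real.dist_0_eq_abs, abs_of_nonneg (apply_nonneg _ _)]
  linarith

theorem continuous_supSeminorm [T1Space X] [BaireSpace X] (hb : IsSchauderBasis e)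
    {p : SeminormFamily ℝ X ℕ} (hp : WithSeminorms p) (hmono : Monotone p) (j : ℕ) :
    Continuous (hb.supSeminorm (p j)) :=
  (hb.isClosable_supSeminorm hp).continuous
    (fun _ _ hik => hb.supSeminorm_mono (hp.continuous_seminorm _) (hp.continuous_seminorm _)
      (hmono hik))
    hp (fun i => hb.le_supSeminorm_self (hp.continuous_seminorm i)) j

end IsSchauderBasis

end

theorem WithSeminorms.exists_pos_of_continuous_norm {𝕜 E ι : Type*} [NontriviallyNormedField 𝕜]
    [AddCommGroup E] [Module 𝕜 E] [TopologicalSpace E] [SemilatticeSup ι] [OrderBot ι]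
    {p : SeminormFamily 𝕜 E ι} (hp : WithSeminorms p) (hmono : Monotone p) {q : Seminorm 𝕜 E}
    (hq : Continuous q) (hpos : ∀ x, x ≠ 0 → 0 < q x) : ∃ i, ∀ x, x ≠ 0 → 0 < p i x := by
  obtain ⟨s, C, -, hqC⟩ := Seminorm.bound_of_continuous hp q hq
  refine ⟨s.sup id, fun x hx => ?_⟩
  have hsup : s.sup p ≤ p (s.sup id) := Finset.sup_le fun i hi => hmono (le_sup (f := id) hi)
  have hqx : q x ≤ C * p (s.sup id) x := (hqC x).trans (mul_le_mul_of_nonneg_left (hsup x) C.2)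
  by_contra! h
  exact (hpos x hx).not_ge (hqx.trans (mul_nonpos_of_nonneg_of_nonpos C.2 h))

theorem stmt_4_general {X : Type*} [AddCommGroup X] [Module ℝ X] [UniformSpace X]
    [IsUniformAddGroup X] [CompleteSpace X]
    (p : SeminormFamily ℝ X ℕ) (hp : WithSeminorms p)
    (hmono : Monotone p) (hsep : ∀ x : X, x ≠ 0 → ∃ j, p j x ≠ 0)
    (e : ℕ → X)
    (hbasis : ∀ x : X, ∃! a : ℕ → ℝ,
      Tendsto (fun N => ∑ n ∈ range N, a n • e n) atTop (nhds x)) :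
    (∃ q : Seminorm ℝ X, Continuous q ∧ ∀ x : X, x ≠ 0 → 0 < q x) ↔
      ∃ j : ℕ, ∀ n : ℕ, 0 < p j (e n) := by
  have hb : IsSchauderBasis e := hbasis
  have := hp.continuousSMul
  have := hp.T1_of_separating hsep
  have := hp.baireSpace
  constructor
  · rintro ⟨q, hq, hpos⟩
    obtain ⟨j, hj⟩ := hp.exists_pos_of_continuous_norm hmono hq hpos
    exact ⟨j, fun n => hj _ (hb.ne_zero n)⟩
  · rintro ⟨j, hj⟩
    exact ⟨hb.supSeminorm (p j), hb.continuous_supSeminorm hp hmono j,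
      fun x => hb.supSeminorm_pos (hp.continuous_seminorm j) hj⟩

/-- A Fréchet space with a Schauder basis `(e_n)` possesses a
continuous norm iff there exists `j` with `p j (e n) > 0` for every `n`. -/
theorem stmt_4 {X : Type*} [AddCommGroup X] [Module ℝ X] [UniformSpace X]
    [IsUniformAddGroup X] [CompleteSpace X] [ContinuousSMul ℝ X]
    (p : SeminormFamily ℝ X ℕ) (hp : WithSeminorms p)
    (hmono : Monotone p) (hsep : ∀ x : X, x ≠ 0 → ∃ j, p j x ≠ 0)
    (e : ℕ → X)
    (hbasis : ∀ x : X, ∃! a : ℕ → ℝ,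
      Tendsto (fun N => ∑ n ∈ range N, a n • e n) atTop (nhds x)) :
    (∃ q : Seminorm ℝ X, Continuous q ∧ ∀ x : X, x ≠ 0 → 0 < q x) ↔
      ∃ j : ℕ, ∀ n : ℕ, 0 < p j (e n) :=
  stmt_4_general p hp hmono hsep e hbasis
end

section
/- Let X be a Fréchet space with seminorms (p_j) such that for every j ≥ 1, ker p_{j+1} has infinite codimension in ker p_j. Then for every j ≥ 1 and every closed subspace E ⊆ X of finite codimension, the seminorms p_j and p_{j+1} are not equivalent on E; in particular there exists x ∈ E with p_j(x) = 0 and p_{j+1}(x) > 0. -/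
/-- The kernel `{x | p x = 0}` of a seminorm, as a submodule. -/
def Seminorm.kerSubmodule {X : Type*} [AddCommGroup X] [Module ℝ X]
    (p : Seminorm ℝ X) : Submodule ℝ X where
  carrier := {x | p x = 0}
  zero_mem' := map_zero p
  add_mem' := by
    intro a b ha hb
    simp only [Set.mem_setOf_eq] at ha hb ⊢
    refine le_antisymm ?_ (apply_nonneg p _)
    calc p (a + b) ≤ p a + p b := map_add_le_add p a b
      _ = 0 := by rw [ha, hb, add_zero]
  smul_mem' := by
    intro c x hx
    simp only [Set.mem_setOf_eq] at hx ⊢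
    rw [map_smul_eq_mul, hx, mul_zero]

/-!
Since `X ⧸ E` is finite-dimensional, so is `ker p_j ⧸ (E ∩ ker p_j)`, which embeds into it.
If `E ∩ ker p_j` were contained in `ker p_{j+1}`, then `ker p_j ⧸ ker p_{j+1}` would be a
quotient of that space, hence finite-dimensional, contrary to the hypothesis.
A point `x ∈ E` with `p_j x = 0 < p_{j+1} x` rules out any bound `p_{j+1} ≤ C p_j` on `E`.
-/

namespace Submodule

variable {R M : Type*} [Ring R] [IsNoetherianRing R] [AddCommGroup M] [Module R M]

theorem finite_quotient_comap_subtype (K E : Submodule R M) [Module.Finite R (M ⧸ E)] :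
    Module.Finite R (K ⧸ E.comap K.subtype) := by
  have hker : LinearMap.ker (E.mkQ ∘ₗ K.subtype) = E.comap K.subtype := by
    rw [LinearMap.ker_comp, ker_mkQ]
  exact Module.Finite.of_injective ((E.comap K.subtype).liftQ _ hker.ge)
    (by rw [← LinearMap.ker_eq_bot, ker_liftQ_eq_bot' _ _ hker.symm])

theorem exists_mem_inf_notMem_of_not_finite_quotient {K L : Submodule R M}
    (E : Submodule R M) [Module.Finite R (M ⧸ E)]
    (hKL : ¬ Module.Finite R (K ⧸ L.comap K.subtype)) :
    ∃ x ∈ K ⊓ E, x ∉ L := by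
  by_contra! h
  have hle : E.comap K.subtype ≤ L.comap K.subtype := fun x hx => h x ⟨x.2, hx⟩
  have := K.finite_quotient_comap_subtype E
  exact hKL (Module.Finite.of_surjective _ (factor_surjective hle))

end Submodule

theorem stmt_7_general {X : Type*} [AddCommGroup X] [Module ℝ X] [UniformSpace X]
    (p : SeminormFamily ℝ X ℕ)
    (hcodim : ∀ j : ℕ, ¬ FiniteDimensional ℝ
      (↥((p j).kerSubmodule) ⧸
        ((p (j + 1)).kerSubmodule.comap ((p j).kerSubmodule).subtype))) :
    ∀ j : ℕ, ∀ E : Submodule ℝ X, IsClosed (E : Set X) →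
      FiniteDimensional ℝ (X ⧸ E) →
      (¬ ∃ C : ℝ, 0 < C ∧ ∀ x ∈ E, p (j + 1) x ≤ C * p j x) ∧
      ∃ x ∈ E, p j x = 0 ∧ 0 < p (j + 1) x := by
  intro j E _ _
  obtain ⟨x, ⟨hxj, hxE⟩, hxj1⟩ :=
    Submodule.exists_mem_inf_notMem_of_not_finite_quotient E (hcodim j)
  have hxj : p j x = 0 := hxj
  have hxj1 : 0 < p (j + 1) x := (apply_nonneg _ _).lt_of_ne' hxj1
  refine ⟨?_, x, hxE, hxj, hxj1⟩
  rintro ⟨C, -, hC⟩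
  have hbound : p (j + 1) x ≤ 0 := by simpa [hxj] using hC x hxE
  exact hbound.not_gt hxj1

/-- If every `ker p_{j+1}` has infinite codimension in `ker p_j`,
then on every closed finite-codimensional subspace `E` the seminorms `p_j` and
`p_{j+1}` are not equivalent; in particular some `x ∈ E` has `p j x = 0` and
`p (j+1) x > 0`. -/
theorem stmt_7 {X : Type*} [AddCommGroup X] [Module ℝ X] [UniformSpace X]
    [IsUniformAddGroup X] [CompleteSpace X] [ContinuousSMul ℝ X]
    (p : SeminormFamily ℝ X ℕ) (hp : WithSeminorms p)
    (hmono : Monotone p) (hsep : ∀ x : X, x ≠ 0 → ∃ j, p j x ≠ 0)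
    (hcodim : ∀ j : ℕ, ¬ FiniteDimensional ℝ
      (↥((p j).kerSubmodule) ⧸
        ((p (j + 1)).kerSubmodule.comap ((p j).kerSubmodule).subtype))) :
    ∀ j : ℕ, ∀ E : Submodule ℝ X, IsClosed (E : Set X) →
      FiniteDimensional ℝ (X ⧸ E) →
      (¬ ∃ C : ℝ, 0 < C ∧ ∀ x ∈ E, p (j + 1) x ≤ C * p j x) ∧
      ∃ x ∈ E, p j x = 0 ∧ 0 < p (j + 1) x :=
  stmt_7_general p hcodim
end

section
/- Let X be a Fréchet space with seminorms (p_j) such that ker p_{j+1} has finite codimension in ker p_j for every j ≥ 1, and suppose ker p_1 ≠ {0} is infinite-dimensional. For each j choose a finite-dimensional complement M_j of ker p_{j+1} in ker p_j with basis (e^j_n)_{1≤n≤n_j}. Then the concatenated family {(e^j_n)}_{j≥1} is a Schauder basis of ker p_1: every x ∈ ker p_1 has a unique convergent representation x = Σ_{j=1}^∞ Σ_{n=1}^{n_j} α^j_n e^j_n. -/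
/-!
Peel off the expansion one kernel at a time: writing `x = m₀ + r₁` with `m₀ ∈ M₀`,
`r₁ ∈ ker p₁`, then `r₁ = m₁ + r₂` and so on, the remainder after `J` steps lies in `ker p_J`,
on which every `p_i` with `i ≤ J` vanishes, so the partial sums converge to `x`. Conversely,
for an expansion of `0` the tail beyond `k` lies in the closed subspace `ker p_k`, hence so does
the `k`-th partial sum; since `M_k ∩ ker p_{k+1} = 0`, all terms vanish inductively.
-/

open Filter Finset

open Topology

namespace Submodule

variable {R V : Type*} [Ring R] [AddCommGroup V] [Module R V] {K M : ℕ → Submodule R V}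

theorem exists_sub_sum_range_mem (hK : ∀ j, K j ≤ M j ⊔ K (j + 1)) {x : V} (hx : x ∈ K 0) :
    ∃ v : ℕ → V, (∀ j, v j ∈ M j) ∧ ∀ J, x - ∑ j ∈ range J, v j ∈ K J := by
  have step : ∀ j (y : K j), ∃ m ∈ M j, (y : V) - m ∈ K (j + 1) := fun j y => by
    obtain ⟨m, hm, r, hr, hy⟩ := mem_sup.mp (hK j y.2)
    exact ⟨m, hm, by rwa [← hy, add_sub_cancel_left]⟩
  choose g hgM hgK using step
  let rem : (J : ℕ) → K J := fun J =>
    Nat.rec (motive := fun J => K J) ⟨x, hx⟩ (fun j y => ⟨y - g j y, hgK j y⟩) J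
  refine ⟨fun j => g j (rem j), fun j => hgM j _, fun J => ?_⟩
  have hrem : x - ∑ j ∈ range J, g j (rem j) = (rem J : V) := by
    induction J with
    | zero => simp [rem]
    | succ J ih => rw [sum_range_succ, sub_add_eq_sub_sub, ih]
  exact hrem ▸ (rem J).2

theorem sum_range_sub_sum_range_mem (hK : Antitone K) (hMK : ∀ j, M j ≤ K j) {v : ℕ → V}
    (hv : ∀ j, v j ∈ M j) {k J : ℕ} (hkJ : k ≤ J) :
    ∑ j ∈ range J, v j - ∑ j ∈ range k, v j ∈ K k := by
  rw [← sum_Ico_eq_sub _ hkJ]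
  exact sum_mem fun j hj => hK (mem_Ico.mp hj).1 (hMK j (hv j))

theorem eq_zero_of_sum_range_mem (hdisj : ∀ j, M j ⊓ K (j + 1) = ⊥) {v : ℕ → V}
    (hv : ∀ j, v j ∈ M j) (hsum : ∀ J, ∑ j ∈ range J, v j ∈ K J) : v = 0 := by
  have hzero : ∀ J, ∑ j ∈ range J, v j = 0 := by
    intro J
    induction J with
    | zero => simp
    | succ J ih =>
      have hJ : v J ∈ M J ⊓ K (J + 1) := ⟨hv J, by simpa [sum_range_succ, ih] using hsum (J + 1)⟩
      rw [hdisj, mem_bot] at hJ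
      rw [sum_range_succ, ih, hJ, add_zero]
  funext j
  have h := hzero (j + 1)
  rwa [sum_range_succ, hzero, zero_add] at h

end Submodule

namespace Seminorm

variable {X : Type*} [AddCommGroup X] [Module ℝ X]

theorem kerSubmodule_anti {p q : Seminorm ℝ X} (h : p ≤ q) : q.kerSubmodule ≤ p.kerSubmodule :=
  fun x hx => le_antisymm ((h x).trans_eq hx) (apply_nonneg p x)

theorem isClosed_kerSubmodule [TopologicalSpace X] {p : Seminorm ℝ X} (hp : Continuous p) :
    IsClosed (p.kerSubmodule : Set X) :=
  isClosed_eq hp continuous_const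

end Seminorm

namespace WithSeminorms

variable {X : Type*} [AddCommGroup X] [Module ℝ X] [TopologicalSpace X]
  {p : SeminormFamily ℝ X ℕ} {M : ℕ → Submodule ℝ X}

theorem tendsto_of_sub_mem_kerSubmodule (hp : WithSeminorms p) (hmono : Monotone p)
    {s : ℕ → X} {x : X} (hs : ∀ J, s J - x ∈ (p J).kerSubmodule) : Tendsto s atTop (𝓝 x) := by
  rw [hp.tendsto_nhds_atTop]
  exact fun i ε hε => ⟨i, fun J hJ => (Seminorm.kerSubmodule_anti (hmono hJ) (hs J)).trans_lt hε⟩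

theorem sub_mem_kerSubmodule_of_tendsto (hp : WithSeminorms p) {s : ℕ → X} {x y : X} {i : ℕ}
    (hs : Tendsto s atTop (𝓝 x)) (h : ∀ᶠ J in atTop, s J - y ∈ (p i).kerSubmodule) :
    x - y ∈ (p i).kerSubmodule :=
  have := hp.topologicalAddGroup
  (Seminorm.isClosed_kerSubmodule (hp.continuous_seminorm i)).mem_of_tendsto (hs.sub_const y) h

theorem eq_zero_of_tendsto_sum_range (hp : WithSeminorms p) (hmono : Monotone p)
    (hMsum : ∀ j, M j ⊔ (p (j + 1)).kerSubmodule = (p j).kerSubmodule)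
    (hMdisj : ∀ j, M j ⊓ (p (j + 1)).kerSubmodule = ⊥) {v : ℕ → X} (hv : ∀ j, v j ∈ M j)
    (hlim : Tendsto (fun J => ∑ j ∈ range J, v j) atTop (𝓝 0)) : v = 0 := by
  have hK : Antitone fun j => (p j).kerSubmodule := fun _ _ h =>
    Seminorm.kerSubmodule_anti (hmono h)
  have hMK : ∀ j, M j ≤ (p j).kerSubmodule := fun j => hMsum j ▸ le_sup_left
  refine Submodule.eq_zero_of_sum_range_mem (K := fun j => (p j).kerSubmodule) hMdisj hv fun k => ?_
  have htail : ∀ᶠ J in atTop, ∑ j ∈ range J, v j - ∑ j ∈ range k, v j ∈ (p k).kerSubmodule :=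
    (eventually_ge_atTop k).mono fun J hJ => Submodule.sum_range_sub_sum_range_mem hK hMK hv hJ
  simpa using hp.sub_mem_kerSubmodule_of_tendsto hlim htail

theorem existsUnique_tendsto_sum_range (hp : WithSeminorms p) (hmono : Monotone p)
    (hMsum : ∀ j, M j ⊔ (p (j + 1)).kerSubmodule = (p j).kerSubmodule)
    (hMdisj : ∀ j, M j ⊓ (p (j + 1)).kerSubmodule = ⊥) {x : X} (hx : x ∈ (p 0).kerSubmodule) :
    ∃! v : ℕ → X, (∀ j, v j ∈ M j) ∧ Tendsto (fun J => ∑ j ∈ range J, v j) atTop (𝓝 x) := by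
  have := hp.topologicalAddGroup
  obtain ⟨v, hvM, hvx⟩ := Submodule.exists_sub_sum_range_mem (fun j => (hMsum j).ge) hx
  have hv : Tendsto (fun J => ∑ j ∈ range J, v j) atTop (𝓝 x) :=
    hp.tendsto_of_sub_mem_kerSubmodule hmono fun J => by simpa using neg_mem (hvx J)
  refine ⟨v, ⟨hvM, hv⟩, fun w ⟨hwM, hw⟩ => sub_eq_zero.mp ?_⟩
  refine hp.eq_zero_of_tendsto_sum_range hmono hMsum hMdisj (fun j => sub_mem (hwM j) (hvM j)) ?_
  simpa [sum_sub_distrib] using hw.sub hv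

end WithSeminorms

-- The index `j = 0` corresponds to the paper's `j = 1`, so `ker p_1` is `(p 0).kerSubmodule`.
theorem stmt_8_general {X : Type*} [AddCommGroup X] [Module ℝ X] [UniformSpace X]
    (p : SeminormFamily ℝ X ℕ) (hp : WithSeminorms p)
    (hmono : Monotone p)
    (M : ℕ → Submodule ℝ X)
    (hMdisj : ∀ j, M j ⊓ (p (j + 1)).kerSubmodule = ⊥)
    (hMsum : ∀ j, M j ⊔ (p (j + 1)).kerSubmodule = (p j).kerSubmodule)
    (d : ℕ → ℕ) (e : (j : ℕ) → Fin (d j) → X)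
    (he_indep : ∀ j, LinearIndependent ℝ (e j))
    (he_span : ∀ j, Submodule.span ℝ (Set.range (e j)) = M j) :
    ∀ x ∈ (p 0).kerSubmodule, ∃! α : (j : ℕ) → Fin (d j) → ℝ,
      Tendsto (fun J => ∑ j ∈ range J, ∑ n : Fin (d j), α j n • e j n)
        atTop (nhds x) := by
  intro x hx
  have hM : ∀ j v, v ∈ M j ↔ ∃ c : Fin (d j) → ℝ, ∑ n, c n • e j n = v := fun j v => by
    rw [← he_span j, Submodule.mem_span_range_iff_exists_fun]
  obtain ⟨v, ⟨hvM, hv⟩, hv_unique⟩ := hp.existsUnique_tendsto_sum_range hmono hMsum hMdisj hx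
  choose α hα using fun j => (hM j (v j)).mp (hvM j)
  refine ⟨α, by simpa only [hα] using hv, fun β hβ => funext fun j => ?_⟩
  have hβv := hv_unique _ ⟨fun j => (hM j _).mpr ⟨β j, rfl⟩, hβ⟩
  exact funext <| Fintype.linearIndependent_iffₛ.mp (he_indep j) _ _ <| by
    rw [congrFun hβv j, hα]

/-- If `ker p_{j+1}` has finite codimension in `ker p_j` for every
`j` and `ker p_1` is infinite-dimensional, then the concatenation of bases of
finite-dimensional complements `M_j` of `ker p_{j+1}` in `ker p_j` is a Schauder
basis of `ker p_1`: every `x ∈ ker p_1` has a unique convergent expansion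
`x = ∑_j ∑_n α^j_n e^j_n`.  (Here the index `j : ℕ` starting at `0` plays the
role of `j ≥ 1` in the paper, so `ker p_1` is `(p 0).kerSubmodule`.) -/
theorem stmt_8 {X : Type*} [AddCommGroup X] [Module ℝ X] [UniformSpace X]
    [IsUniformAddGroup X] [CompleteSpace X] [ContinuousSMul ℝ X]
    (p : SeminormFamily ℝ X ℕ) (hp : WithSeminorms p)
    (hmono : Monotone p) (hsep : ∀ x : X, x ≠ 0 → ∃ j, p j x ≠ 0)
    (hfincodim : ∀ j : ℕ, FiniteDimensional ℝ
      (↥((p j).kerSubmodule) ⧸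
        ((p (j + 1)).kerSubmodule.comap ((p j).kerSubmodule).subtype)))
    (hinf : ¬ FiniteDimensional ℝ ↥((p 0).kerSubmodule))
    (M : ℕ → Submodule ℝ X)
    (hMle : ∀ j, M j ≤ (p j).kerSubmodule)
    (hMdisj : ∀ j, M j ⊓ (p (j + 1)).kerSubmodule = ⊥)
    (hMsum : ∀ j, M j ⊔ (p (j + 1)).kerSubmodule = (p j).kerSubmodule)
    (hMfin : ∀ j, FiniteDimensional ℝ ↥(M j))
    (d : ℕ → ℕ) (e : (j : ℕ) → Fin (d j) → X)
    (he_indep : ∀ j, LinearIndependent ℝ (e j))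
    (he_span : ∀ j, Submodule.span ℝ (Set.range (e j)) = M j) :
    ∀ x ∈ (p 0).kerSubmodule, ∃! α : (j : ℕ) → Fin (d j) → ℝ,
      Tendsto (fun J => ∑ j ∈ range J, ∑ n : Fin (d j), α j n • e j n)
        atTop (nhds x) :=
  stmt_8_general p hp hmono M hMdisj hMsum d e he_indep he_span
end

section
/- Let X = λ^p(A) (1 ≤ p < ∞) be a Köthe sequence space possessing a continuous norm, with a_{1,n} > 0 for all n, and suppose that for every C > 0 and every j ≥ 1 the set I_{j,C} = {n : a_{j+1,n} > C·a_{j,n}} is infinite. Then for every j ≥ 1 and every closed subspace E of finite codimension, the seminorms p_j and p_{j+1} are not equivalent on E. -/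
open Filter Finset

/-- The Köthe space `λ^p(A)` as a set of scalar sequences. -/
def kothePSet (a : ℕ → ℕ → ℝ) (p : ℝ) : Set (ℕ → ℝ) :=
  {x | ∀ j : ℕ, Summable fun k => |x k * a j k| ^ p}

/-- The canonical seminorms `p_j(x) = (∑_k |x_k a_{j,k}|^p)^{1/p}` of `λ^p(A)`. -/
noncomputable def kothePSeminorm (a : ℕ → ℕ → ℝ) (p : ℝ) (j : ℕ) (x : ℕ → ℝ) : ℝ :=
  (∑' k, |x k * a j k| ^ p) ^ (1 / p)

/-- Let `X = λ^p(A)` (`1 ≤ p < ∞`) have a continuous norm (here: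
`a_{1,n} > 0` for all `n`) and suppose every set `I_{j,C} = {n : a_{j+1,n} >
C a_{j,n}}` is infinite.  Then for every `j` and every closed subspace `E` of
finite codimension, `p_j` and `p_{j+1}` are not equivalent on `E`. -/
theorem stmt_11 (a : ℕ → ℕ → ℝ) (p : ℝ) (hp : 1 ≤ p)
    (hpos : ∀ n, 0 < a 0 n)
    (hmono : ∀ j n, a j n ≤ a (j + 1) n)
    (hinf : ∀ C : ℝ, 0 < C → ∀ j : ℕ, {n : ℕ | C * a j n < a (j + 1) n}.Infinite)
    (E : Submodule ℝ (ℕ → ℝ))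
    (hEsub : (E : Set (ℕ → ℝ)) ⊆ kothePSet a p)
    -- `E` is closed in `λ^p(A)` for the topology of the seminorms
    (hEclosed : ∀ x ∈ kothePSet a p,
      (∀ j : ℕ, ∀ ε : ℝ, 0 < ε → ∃ y ∈ E, kothePSeminorm a p j (x - y) < ε) →
      x ∈ E)
    -- `E` has finite codimension in `λ^p(A)`
    (hEcodim : ∃ (d : ℕ) (v : Fin d → (ℕ → ℝ)), (∀ i, v i ∈ kothePSet a p) ∧
      ∀ x ∈ kothePSet a p, ∃ y ∈ E, ∃ c : Fin d → ℝ, x = y + ∑ i, c i • v i) :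
    ∀ j : ℕ, ¬ ∃ C : ℝ, 0 < C ∧ ∀ x ∈ E,
      kothePSeminorm a p (j + 1) x ≤ C * kothePSeminorm a p j x := by
  intro j
  rintro ⟨C, hC, hle⟩
  obtain ⟨d, v, hv, hspan⟩ := hEcodim
  have hp0 : 0 < p := lt_of_lt_of_le one_pos hp
  have hpne : p ≠ 0 := ne_of_gt hp0
  have haj : ∀ j n, 0 < a j n := by
    intro j
    induction j with
    | zero => exact hpos
    | succ m ih => exact fun n => lt_of_lt_of_le (ih n) (hmono m n)
  -- pick d+1 distinct indices in I = {n | C * a j n < a (j+1) n}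
  have hIinf := hinf C hC j
  let f := hIinf.natEmbedding
  let nn : Fin (d + 1) → ℕ := fun i => (f i.val : ℕ)
  have hnnI : ∀ i, C * a j (nn i) < a (j + 1) (nn i) := fun i => (f i.val).2
  have hnninj : Function.Injective nn := by
    intro i i' h
    exact Fin.val_injective (f.injective (Subtype.val_injective h))
  -- the basis vectors
  let e : Fin (d + 1) → (ℕ → ℝ) := fun i => Pi.single (nn i) (1 : ℝ)
  have heK : ∀ i, e i ∈ kothePSet a p := by
    intro i j'
    apply summable_of_ne_finset_zero (s := {nn i})
    intro k hk
    have : e i k = 0 := Pi.single_eq_of_ne (by simpa using hk) 1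
    simp [this, Real.zero_rpow hpne]
  choose y hyE c hc using fun i => hspan (e i) (heK i)
  -- the coefficient vectors are linearly dependent
  have hdep : ¬ LinearIndependent ℝ c := by
    intro h
    have h1 := h.fintype_card_le_finrank
    simp [Module.finrank_fintype_fun_eq_card] at h1
  obtain ⟨t, hg0, i₀, hti₀⟩ := Fintype.not_linearIndependent_iff.1 hdep
  -- the combination x
  set x : ℕ → ℝ := ∑ i, t i • e i with hxdef
  have key : ∀ k, ∑ i, t i * c i k = 0 := by
    intro k
    have := congrFun hg0 k
    simpa using this
  have hzero : ∑ i, t i • (∑ k, c i k • v k) = (0 : ℕ → ℝ) := by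
    calc ∑ i, t i • (∑ k, c i k • v k)
        = ∑ i, ∑ k, (t i * c i k) • v k := by
          simp [Finset.smul_sum, smul_smul]
      _ = ∑ k, ∑ i, (t i * c i k) • v k := Finset.sum_comm
      _ = ∑ k, (∑ i, t i * c i k) • v k := by simp [Finset.sum_smul]
      _ = 0 := by simp [key]
  have hxE : x ∈ E := by
    have hx2 : x = ∑ i, t i • y i := by
      calc x = ∑ i, t i • (y i + ∑ k, c i k • v k) := by
              rw [hxdef]; exact Finset.sum_congr rfl fun i _ => by rw [hc i]
        _ = (∑ i, t i • y i) + ∑ i, t i • (∑ k, c i k • v k) := by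
              simp [smul_add, Finset.sum_add_distrib]
        _ = ∑ i, t i • y i := by rw [hzero, add_zero]
    rw [hx2]
    exact Submodule.sum_mem E fun i _ => Submodule.smul_mem E _ (hyE i)
  -- values of x
  have hxval : ∀ m, x m = ∑ i, t i * (e i m) := by
    intro m; simp [hxdef]
  have hx0 : x (nn i₀) = t i₀ := by
    rw [hxval]
    rw [Finset.sum_eq_single i₀]
    · simp [e]
    · intro i _ hne
      have : nn i ≠ nn i₀ := fun h => hne (hnninj h)
      simp only [e]
      rw [Pi.single_eq_of_ne this.symm, mul_zero]
    · simp
  set s : Finset ℕ := Finset.image nn Finset.univ with hs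
  have hsupp : ∀ m, m ∉ s → x m = 0 := by
    intro m hm
    rw [hxval]
    apply Finset.sum_eq_zero
    intro i _
    have : nn i ≠ m := by
      intro h; exact hm (by rw [← h]; exact Finset.mem_image_of_mem nn (Finset.mem_univ i))
    simp [e, Pi.single_eq_of_ne (Ne.symm this)]
  -- seminorms as finite sums
  have hts : ∀ j', kothePSeminorm a p j' x = (∑ k ∈ s, |x k * a j' k| ^ p) ^ (1 / p) := by
    intro j'
    rw [kothePSeminorm, tsum_eq_sum]
    intro k hk
    simp [hsupp k hk, Real.zero_rpow hpne]
  -- termwise comparison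
  have habs : ∀ k ∈ s, C * |x k * a j k| ≤ |x k * a (j + 1) k| := by
    intro k hk
    obtain ⟨i, -, rfl⟩ := Finset.mem_image.1 hk
    rw [abs_mul, abs_mul, abs_of_pos (haj j _), abs_of_pos (haj (j + 1) _),
      mul_left_comm]
    exact mul_le_mul_of_nonneg_left (le_of_lt (hnnI i)) (abs_nonneg _)
  have hterm : ∀ k ∈ s, C ^ p * |x k * a j k| ^ p ≤ |x k * a (j + 1) k| ^ p := by
    intro k hk
    rw [← Real.mul_rpow hC.le (abs_nonneg _)]
    exact Real.rpow_le_rpow (by positivity) (habs k hk) hp0.le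
  have hstrict : C ^ p * |x (nn i₀) * a j (nn i₀)| ^ p
      < |x (nn i₀) * a (j + 1) (nn i₀)| ^ p := by
    rw [← Real.mul_rpow hC.le (abs_nonneg _)]
    apply Real.rpow_lt_rpow (by positivity) _ hp0
    rw [abs_mul, abs_mul, abs_of_pos (haj j _), abs_of_pos (haj (j + 1) _),
      mul_left_comm]
    have hxpos : 0 < |x (nn i₀)| := by rw [hx0]; exact abs_pos.2 hti₀
    exact mul_lt_mul_of_pos_left (hnnI i₀) hxpos
  have hi₀s : nn i₀ ∈ s := Finset.mem_image_of_mem nn (Finset.mem_univ i₀)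
  have hsum : ∑ k ∈ s, C ^ p * |x k * a j k| ^ p < ∑ k ∈ s, |x k * a (j + 1) k| ^ p :=
    Finset.sum_lt_sum hterm ⟨nn i₀, hi₀s, hstrict⟩
  rw [← Finset.mul_sum] at hsum
  -- conclude
  have hSj : (0 : ℝ) ≤ ∑ k ∈ s, |x k * a j k| ^ p :=
    Finset.sum_nonneg fun k _ => Real.rpow_nonneg (abs_nonneg _) p
  have hfin : C * kothePSeminorm a p j x < kothePSeminorm a p (j + 1) x := by
    rw [hts j, hts (j + 1)]
    have h1 : (C ^ p * ∑ k ∈ s, |x k * a j k| ^ p) ^ (1 / p)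
        < (∑ k ∈ s, |x k * a (j + 1) k| ^ p) ^ (1 / p) :=
      Real.rpow_lt_rpow (by positivity) hsum (by positivity)
    rwa [Real.mul_rpow (by positivity) hSj, ← Real.rpow_mul hC.le,
      mul_one_div_cancel hpne, Real.rpow_one] at h1
  exact absurd (hle x hxE) (not_le.2 hfin)
end

section
/- Let E be a vector space, p a seminorm on E, and F a subspace of E such that F ∩ ker p has infinite codimension in ker p (where codimension is in ker p). If E₀ is a subspace of finite codimension in E, then E₀ ∩ ker p is not contained in F. Consequently, if X is a Fréchet space with seminorms (p_j) such that ker p_{j+1} has infinite codimension in ker p_j, then every closed finite-codimensional subspace E of X contains a vector x with p_j(x) = 0 and p_{j+1}(x) > 0. -/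
/-!
If `E₀ ⊓ N ≤ F`, then the quotient map `N → N ⧸ (F ∩ N)` factors through `N ⧸ (E₀ ∩ N)`,
which embeds into the finite-dimensional space `E ⧸ E₀` via `N → E → E ⧸ E₀`; so `F ∩ N`
would have finite codimension in `N`. For the Fréchet-space consequence take `N = ker p_j`
and `F = ker p_{j+1}`.
-/

namespace Submodule

theorem comap_subtype_inf_right {R M : Type*} [Semiring R] [AddCommMonoid M] [Module R M]
    (F N : Submodule R M) : (F ⊓ N).comap N.subtype = F.comap N.subtype := by
  rw [comap_inf, comap_subtype_self, inf_top_eq]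

variable {K V : Type*} [DivisionRing K] [AddCommGroup V] [Module K V]

theorem finiteDimensional_quotient_comap_subtype (N E₀ : Submodule K V)
    [FiniteDimensional K (V ⧸ E₀)] : FiniteDimensional K (N ⧸ E₀.comap N.subtype) := by
  have hker : LinearMap.ker (E₀.mkQ ∘ₗ N.subtype) = E₀.comap N.subtype := by
    rw [LinearMap.ker_comp, ker_mkQ]
  rw [← hker]
  exact (E₀.mkQ ∘ₗ N.subtype).quotKerEquivRange.symm.finiteDimensional

theorem not_inf_le_of_not_finiteDimensional_quotient {N F E₀ : Submodule K V}
    (hF : ¬ FiniteDimensional K (N ⧸ F.comap N.subtype)) (hE₀ : FiniteDimensional K (V ⧸ E₀)) :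
    ¬ E₀ ⊓ N ≤ F := by
  intro hle
  have hcomap : E₀.comap N.subtype ≤ F.comap N.subtype := fun x hx => hle ⟨hx, x.2⟩
  have := finiteDimensional_quotient_comap_subtype N E₀
  exact hF (Module.Finite.of_surjective _ (factor_surjective hcomap))

end Submodule

/-- (i) If `F ∩ ker p` has infinite codimension in `ker p` and
`E₀` has finite codimension in `E`, then `E₀ ∩ ker p ⊄ F`.  (ii) Consequently,
in a Fréchet space where `ker p_{j+1}` has infinite codimension in `ker p_j`,
every closed finite-codimensional subspace `E` contains an `x` with
`p_j x = 0` and `p_{j+1} x > 0`. -/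
theorem stmt_12 :
    (∀ (E : Type) (_ : AddCommGroup E), ∀ (_ : Module ℝ E)
      (p : Seminorm ℝ E) (F E₀ : Submodule ℝ E),
      ¬ FiniteDimensional ℝ
        (↥p.kerSubmodule ⧸ ((F ⊓ p.kerSubmodule).comap p.kerSubmodule.subtype)) →
      FiniteDimensional ℝ (E ⧸ E₀) →
      ¬ (E₀ ⊓ p.kerSubmodule ≤ F)) ∧
    (∀ (X : Type) (_ : AddCommGroup X), ∀ (_ : Module ℝ X),
      ∀ (_ : UniformSpace X), ∀ (_ : IsUniformAddGroup X) (_ : CompleteSpace X)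
        (_ : ContinuousSMul ℝ X)
        (p : SeminormFamily ℝ X ℕ), WithSeminorms p → Monotone p →
      (∀ x : X, x ≠ 0 → ∃ j, p j x ≠ 0) →
      (∀ j : ℕ, ¬ FiniteDimensional ℝ
        (↥((p j).kerSubmodule) ⧸
          ((p (j + 1)).kerSubmodule.comap ((p j).kerSubmodule).subtype))) →
      ∀ j : ℕ, ∀ E : Submodule ℝ X, IsClosed (E : Set X) →
        FiniteDimensional ℝ (X ⧸ E) →
        ∃ x ∈ E, p j x = 0 ∧ 0 < p (j + 1) x) := by
  refine ⟨fun E _ _ p F E₀ hF hE₀ => ?_, fun X _ _ _ _ _ _ p _ _ _ hcodim j E _ hE => ?_⟩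
  · rw [Submodule.comap_subtype_inf_right] at hF
    exact Submodule.not_inf_le_of_not_finiteDimensional_quotient hF hE₀
  · obtain ⟨x, ⟨hxE, hxj⟩, hxj'⟩ := SetLike.not_le_iff_exists.mp
      (Submodule.not_inf_le_of_not_finiteDimensional_quotient (hcodim j) hE)
    exact ⟨x, hxE, hxj, (apply_nonneg _ x).lt_of_ne' hxj'⟩
end

section
/- Let X be a Fréchet space with seminorms (p_j) and suppose (e_n)_{n≥1} is a sequence in X with p_1(e_n) > 0 for all n, such that there exists a constant Γ ≥ 1 with: for every 1 ≤ j ≤ L₀ and every L₁ > L₀ and all scalars a_j,…,a_{L₁}, p_j(Σ_{n=j}^{L₀} a_n e_n) ≤ Γ·p_j(Σ_{n=j}^{L₁} a_n e_n). Then (e_n) is a basic sequence, i.e., (e_n) is a Schauder basis of the closed linear span of {e_n : n ≥ 1}. -/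
open Filter Finset Topology

/-!
At `j = 0` the hypothesis bounds the partial-sum projections `S_N` in `p₀`, so every coefficient
satisfies `|a_m| p₀(e_m) ≤ 2Γ p₀(S_N a)`; this already makes expansions unique. For general `j`,
split `S_N` into its first `j` terms, controlled coefficientwise through `p₀ ≤ p_j`, and the part
from `j` on, controlled by the hypothesis at `j`: hence `p_j(S_N a) ≤ C_j p_j(S_M a)` for `N ≤ M`.
Approximating `x` in the closed span by finite combinations `y_k`, the coefficients of `y_k`
converge to some `a`, and the uniform bound passes to the limit as
`p_j(S_N a - x) ≤ (C_j + 1) p_j(y_k - x)` for large `N`.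
-/

section PartialSum

variable {X : Type*} [AddCommGroup X] [Module ℝ X] (e : ℕ → X)

def partialSum (c : ℕ → ℝ) (N : ℕ) : X := ∑ n ∈ range N, c n • e n

lemma partialSum_sub (u v : ℕ → ℝ) (N : ℕ) :
    partialSum e (u - v) N = partialSum e u N - partialSum e v N := by
  simp only [partialSum, Pi.sub_apply, sub_smul, sum_sub_distrib]

lemma partialSum_succ_sub (c : ℕ → ℝ) (m : ℕ) :
    partialSum e c (m + 1) - partialSum e c m = c m • e m := by
  rw [partialSum, partialSum, sum_range_succ, add_sub_cancel_left]

lemma partialSum_eq_add_sum_Ico (c : ℕ → ℝ) (j N : ℕ) :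
    partialSum e c N = partialSum e c (min j N) + ∑ n ∈ Ico j N, c n • e n := by
  have hIco : Ico (min j N) N = Ico j N := by
    rcases le_total j N with h | h
    · rw [min_eq_left h]
    · rw [min_eq_right h, Ico_self, Ico_eq_empty_of_le h]
  rw [partialSum, partialSum, ← hIco, sum_range_add_sum_Ico _ (min_le_right j N)]

lemma exists_partialSum_eq_of_mem_span {y : X} (hy : y ∈ Submodule.span ℝ (Set.range e)) :
    ∃ (b : ℕ → ℝ) (L : ℕ), ∀ N, L ≤ N → partialSum e b N = y := by
  obtain ⟨c, rfl⟩ := Finsupp.mem_span_range_iff_exists_finsupp.mp hy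
  refine ⟨c, c.support.sup id + 1, fun N hN => ?_⟩
  have hsupp : c.support ⊆ range N :=
    c.support.subset_range_sup_succ.trans (range_subset_range.mpr hN)
  exact (Finsupp.sum_of_support_subset c hsupp (fun n r => r • e n)
    fun n _ => zero_smul ℝ (e n)).symm

lemma abs_mul_le_of_partialSum_le {p : Seminorm ℝ X} {Γ : ℝ} {c : ℕ → ℝ} {N m : ℕ}
    (h : ∀ K ≤ N, p (partialSum e c K) ≤ Γ * p (partialSum e c N)) (hm : m < N) :
    |c m| * p (e m) ≤ 2 * Γ * p (partialSum e c N) :=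
  calc |c m| * p (e m) = p (partialSum e c (m + 1) - partialSum e c m) := by
        rw [partialSum_succ_sub, map_smul_eq_mul, Real.norm_eq_abs]
    _ ≤ p (partialSum e c (m + 1)) + p (partialSum e c m) := map_sub_le_add _ _ _
    _ ≤ Γ * p (partialSum e c N) + Γ * p (partialSum e c N) := add_le_add (h _ hm) (h _ hm.le)
    _ = 2 * Γ * p (partialSum e c N) := by ring

lemma abs_sub_mul_le_of_partialSum_eq {q : Seminorm ℝ X} {Γ : ℝ}
    (hΓ : ∀ c K N, K ≤ N → q (partialSum e c K) ≤ Γ * q (partialSum e c N))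
    {y : ℕ → X} {b : ℕ → ℕ → ℝ} {L : ℕ → ℕ} (hb : ∀ k N, L k ≤ N → partialSum e (b k) N = y k)
    (k l m : ℕ) : |b k m - b l m| * q (e m) ≤ 2 * Γ * q (y k - y l) := by
  set N := max (max (L k) (L l)) (m + 1)
  have h := abs_mul_le_of_partialSum_le e (c := b k - b l) (fun K hK => hΓ _ K N hK)
    (m.lt_succ_self.trans_le (le_max_right _ _))
  rwa [partialSum_sub, hb k N (le_max_of_le_left (le_max_left _ _)),
    hb l N (le_max_of_le_left (le_max_right _ _)), Pi.sub_apply] at h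

end PartialSum

section Expansion

variable {X : Type*} [AddCommGroup X] [Module ℝ X] [TopologicalSpace X] {e : ℕ → X}
  {ι : Type*} {p : SeminormFamily ℝ X ι}

lemma WithSeminorms.tendsto_seminorm_sub (hp : WithSeminorms p) {α : Type*} {l : Filter α}
    {u v : α → X} {x : X} (hu : Tendsto u l (𝓝 x)) (hv : Tendsto v l (𝓝 x)) (i : ι) :
    Tendsto (fun k => p i (u k - v k)) l (𝓝 0) := by
  have := hp.topologicalAddGroup
  simpa [Function.comp_def] using ((hp.continuous_seminorm i).tendsto (x - x)).comp (hu.sub hv)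

theorem eq_of_tendsto_partialSum (hp : WithSeminorms p) {i₀ : ι} (hpos : ∀ n, 0 < p i₀ (e n))
    {Γ : ℝ} (hΓ : ∀ c K N, K ≤ N → p i₀ (partialSum e c K) ≤ Γ * p i₀ (partialSum e c N))
    {u v : ℕ → ℝ} {z : X} (hu : Tendsto (partialSum e u) atTop (𝓝 z))
    (hv : Tendsto (partialSum e v) atTop (𝓝 z)) : u = v := by
  have hlim : Tendsto (fun N => p i₀ (partialSum e (u - v) N)) atTop (𝓝 0) := by
    simpa [partialSum_sub] using hp.tendsto_seminorm_sub hu hv i₀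
  have hzero : ∀ K, p i₀ (partialSum e (u - v) K) = 0 := fun K =>
    le_antisymm (ge_of_tendsto (by simpa using hlim.const_mul Γ)
      ((eventually_ge_atTop K).mono fun N hN => hΓ _ K N hN)) (apply_nonneg _ _)
  funext m
  have hm := abs_mul_le_of_partialSum_le e (fun K hK => hΓ (u - v) K (m + 1) hK) m.lt_succ_self
  rw [hzero, mul_zero] at hm
  have : |u m - v m| = 0 :=
    le_antisymm (nonpos_of_mul_nonpos_left hm (hpos m)) (abs_nonneg _)
  exact sub_eq_zero.mp (abs_eq_zero.mp this)

lemma cauchySeq_coeff (hp : WithSeminorms p) {i₀ : ι} (hpos : ∀ n, 0 < p i₀ (e n))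
    {Γ : ℝ} (hΓ : ∀ c K N, K ≤ N → p i₀ (partialSum e c K) ≤ Γ * p i₀ (partialSum e c N))
    {x : X} {y : ℕ → X} (hy : Tendsto y atTop (𝓝 x)) {b : ℕ → ℕ → ℝ} {L : ℕ → ℕ}
    (hb : ∀ k N, L k ≤ N → partialSum e (b k) N = y k) (m : ℕ) :
    CauchySeq fun k => b k m := by
  rw [cauchySeq_iff_tendsto_dist_atTop_0, ← prod_atTop_atTop_eq]
  have hy₂ : Tendsto (fun kl : ℕ × ℕ => 2 * Γ * p i₀ (y kl.1 - y kl.2) / p i₀ (e m))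
      (atTop ×ˢ atTop) (𝓝 0) := by
    simpa using ((hp.tendsto_seminorm_sub (hy.comp tendsto_fst) (hy.comp tendsto_snd)
      i₀).const_mul (2 * Γ)).div_const (p i₀ (e m))
  refine squeeze_zero (fun _ => dist_nonneg) (fun kl => ?_) hy₂
  rw [Real.dist_eq, le_div_iff₀ (hpos m)]
  exact abs_sub_mul_le_of_partialSum_eq e hΓ hb kl.1 kl.2 m

lemma seminorm_partialSum_sub_le (hp : WithSeminorms p) {i : ι} {C : ℝ}
    (hC : ∀ c N M, N ≤ M → p i (partialSum e c N) ≤ C * p i (partialSum e c M))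
    {x : X} {y : ℕ → X} (hy : Tendsto y atTop (𝓝 x)) {b : ℕ → ℕ → ℝ} {L : ℕ → ℕ}
    (hb : ∀ k N, L k ≤ N → partialSum e (b k) N = y k) {a : ℕ → ℝ}
    (ha : ∀ m, Tendsto (fun k => b k m) atTop (𝓝 (a m))) {k N : ℕ} (hN : L k ≤ N) :
    p i (partialSum e a N - y k) ≤ C * p i (x - y k) := by
  have := hp.topologicalAddGroup
  have := hp.continuousSMul
  have hS : Tendsto (fun l => partialSum e (b l) N) atTop (𝓝 (partialSum e a N)) :=
    tendsto_finsetSum _ fun n _ => (ha n).smul_const (e n)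
  have hpi := hp.continuous_seminorm i
  refine le_of_tendsto_of_tendsto' ((hpi.tendsto _).comp (hS.sub_const (y k)))
    (((hpi.tendsto _).comp (hy.sub_const (y k))).const_mul C) fun l => ?_
  set M := max N (max (L l) (L k))
  have h := hC (b l - b k) N M (le_max_left _ _)
  rwa [partialSum_sub, partialSum_sub, hb k N hN, hb l M (le_max_of_le_right (le_max_left _ _)),
    hb k M (le_max_of_le_right (le_max_right _ _))] at h

theorem exists_tendsto_partialSum_of_mem_closure [Countable ι] (hp : WithSeminorms p) {i₀ : ι}
    (hpos : ∀ n, 0 < p i₀ (e n)) {C : ι → ℝ}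
    (hC : ∀ i c N M, N ≤ M → p i (partialSum e c N) ≤ C i * p i (partialSum e c M)) {x : X}
    (hx : x ∈ closure (Submodule.span ℝ (Set.range e) : Set X)) :
    ∃ a, Tendsto (partialSum e a) atTop (𝓝 x) := by
  have := hp.firstCountableTopology
  obtain ⟨y, hy_mem, hy⟩ := mem_closure_iff_seq_limit.mp hx
  choose b L hb using fun k => exists_partialSum_eq_of_mem_span e (hy_mem k)
  choose a ha using fun m => cauchySeq_tendsto_of_complete
    (cauchySeq_coeff hp hpos (hC i₀) hy hb m)
  refine ⟨a, (hp.tendsto_nhds _ x).mpr fun i ε hε => ?_⟩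
  have hyk : Tendsto (fun k => (C i + 1) * p i (y k - x)) atTop (𝓝 0) := by
    simpa using (hp.tendsto_seminorm_sub hy tendsto_const_nhds i).const_mul (C i + 1)
  obtain ⟨k, hk⟩ := (hyk.eventually (gt_mem_nhds hε)).exists
  filter_upwards [eventually_ge_atTop (L k)] with N hN
  calc p i (partialSum e a N - x)
      ≤ p i (partialSum e a N - y k) + p i (y k - x) := by
        simpa using map_add_le_add (p i) (partialSum e a N - y k) (y k - x)
    _ ≤ C i * p i (y k - x) + p i (y k - x) := by
        grw [seminorm_partialSum_sub_le hp (hC i) hy hb ha hN, map_sub_rev]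
    _ = (C i + 1) * p i (y k - x) := by ring
    _ < ε := hk

theorem existsUnique_tendsto_partialSum_of_mem_closure [Countable ι] (hp : WithSeminorms p)
    {i₀ : ι} (hpos : ∀ n, 0 < p i₀ (e n)) {C : ι → ℝ}
    (hC : ∀ i c N M, N ≤ M → p i (partialSum e c N) ≤ C i * p i (partialSum e c M)) {x : X}
    (hx : x ∈ closure (Submodule.span ℝ (Set.range e) : Set X)) :
    ∃! a, Tendsto (partialSum e a) atTop (𝓝 x) := by
  obtain ⟨a, ha⟩ := exists_tendsto_partialSum_of_mem_closure hp hpos hC hx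
  exact ⟨a, ha, fun a' ha' => eq_of_tendsto_partialSum hp hpos (hC i₀) ha' ha⟩

end Expansion

section MonotoneSeminorms

variable {X : Type*} [AddCommGroup X] [Module ℝ X] (p : SeminormFamily ℝ X ℕ) (e : ℕ → X)

def ShiftedProjectionBound (Γ : ℝ) : Prop :=
  ∀ j L₀ L₁ : ℕ, j ≤ L₀ → L₀ < L₁ → ∀ a : ℕ → ℝ,
    p j (∑ n ∈ Icc j L₀, a n • e n) ≤ Γ * p j (∑ n ∈ Icc j L₁, a n • e n)

variable {Γ : ℝ}

lemma seminorm_sum_Ico_le (hΓ : 1 ≤ Γ) (hproj : ShiftedProjectionBound p e Γ)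
    (c : ℕ → ℝ) (j : ℕ) {K N : ℕ} (hKN : K ≤ N) :
    p j (∑ n ∈ Ico j K, c n • e n) ≤ Γ * p j (∑ n ∈ Ico j N, c n • e n) := by
  rcases le_or_gt K j with hK | hK
  · rw [Ico_eq_empty_of_le hK, sum_empty, map_zero]
    exact mul_nonneg (zero_le_one.trans hΓ) (apply_nonneg _ _)
  rcases hKN.eq_or_lt with rfl | hKN
  · exact le_mul_of_one_le_left (apply_nonneg _ _) hΓ
  have h := hproj j (K - 1) (N - 1) (by omega) (by omega) c
  rwa [← Ico_add_one_right_eq_Icc, ← Ico_add_one_right_eq_Icc, Nat.sub_add_cancel (by omega),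
    Nat.sub_add_cancel (by omega)] at h

lemma seminorm_partialSum_le_of_le_index (hmono : Monotone p) (hpos : ∀ n, 0 < p 0 (e n))
    (hΓ : 1 ≤ Γ) (hproj : ShiftedProjectionBound p e Γ)
    (c : ℕ → ℝ) {j K M : ℕ} (hKj : K ≤ j) (hKM : K ≤ M) :
    p j (partialSum e c K) ≤
      2 * Γ * (∑ n ∈ range j, p j (e n) / p 0 (e n)) * p j (partialSum e c M) := by
  set B := 2 * Γ * p 0 (partialSum e c M)
  have hB : 0 ≤ B := by have := apply_nonneg (p 0) (partialSum e c M); positivity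
  have hcoef : ∀ n ∈ range K, |c n| * p j (e n) ≤ B * (p j (e n) / p 0 (e n)) := by
    intro n hn
    have h := abs_mul_le_of_partialSum_le e (p := p 0) (c := c) (N := M) (fun K hK => by
        simpa only [partialSum, range_eq_Ico] using seminorm_sum_Ico_le p e hΓ hproj c 0 hK)
      ((mem_range.mp hn).trans_le hKM)
    calc |c n| * p j (e n) = |c n| * p 0 (e n) * (p j (e n) / p 0 (e n)) := by
          field_simp [(hpos n).ne']
      _ ≤ B * (p j (e n) / p 0 (e n)) :=
          mul_le_mul_of_nonneg_right h (div_nonneg (apply_nonneg _ _) (hpos n).le)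
  calc p j (partialSum e c K) ≤ ∑ n ∈ range K, p j (c n • e n) :=
        le_sum_of_subadditive (p j) (map_zero _).le (map_add_le_add _) _ _
    _ = ∑ n ∈ range K, |c n| * p j (e n) := by
        simp only [map_smul_eq_mul, Real.norm_eq_abs]
    _ ≤ ∑ n ∈ range K, B * (p j (e n) / p 0 (e n)) := sum_le_sum hcoef
    _ ≤ ∑ n ∈ range j, B * (p j (e n) / p 0 (e n)) :=
        sum_le_sum_of_subset_of_nonneg (range_subset_range.mpr hKj) fun n _ _ =>
          mul_nonneg hB (div_nonneg (apply_nonneg _ _) (hpos n).le)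
    _ = 2 * Γ * (∑ n ∈ range j, p j (e n) / p 0 (e n)) * p 0 (partialSum e c M) := by
        rw [← mul_sum]; ring
    _ ≤ 2 * Γ * (∑ n ∈ range j, p j (e n) / p 0 (e n)) * p j (partialSum e c M) := by
        gcongr
        exact hmono (Nat.zero_le j) _

lemma exists_seminorm_partialSum_le (hmono : Monotone p) (hpos : ∀ n, 0 < p 0 (e n))
    (hΓ : 1 ≤ Γ) (hproj : ShiftedProjectionBound p e Γ) :
    ∃ C : ℕ → ℝ, ∀ j c N M, N ≤ M → p j (partialSum e c N) ≤ C j * p j (partialSum e c M) := by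
  set D : ℕ → ℝ := fun j => 2 * Γ * ∑ n ∈ range j, p j (e n) / p 0 (e n)
  refine ⟨fun j => D j + Γ * (1 + D j), fun j c N M hNM => ?_⟩
  have head : ∀ K, K ≤ j → K ≤ M → p j (partialSum e c K) ≤ D j * p j (partialSum e c M) :=
    fun K hKj hKM => seminorm_partialSum_le_of_le_index p e hmono hpos hΓ hproj c hKj hKM
  have tail : p j (∑ n ∈ Ico j M, c n • e n) ≤ (1 + D j) * p j (partialSum e c M) :=
    calc p j (∑ n ∈ Ico j M, c n • e n) = p j (partialSum e c M - partialSum e c (min j M)) := by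
          rw [partialSum_eq_add_sum_Ico e c j M, add_sub_cancel_left]
      _ ≤ p j (partialSum e c M) + p j (partialSum e c (min j M)) := map_sub_le_add _ _ _
      _ ≤ p j (partialSum e c M) + D j * p j (partialSum e c M) := by
          grw [head _ (min_le_left _ _) (min_le_right _ _)]
      _ = (1 + D j) * p j (partialSum e c M) := by ring
  calc p j (partialSum e c N)
      ≤ p j (partialSum e c (min j N)) + p j (∑ n ∈ Ico j N, c n • e n) := by
        rw [partialSum_eq_add_sum_Ico e c j N]; exact map_add_le_add _ _ _
    _ ≤ D j * p j (partialSum e c M) + Γ * ((1 + D j) * p j (partialSum e c M)) :=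
        add_le_add (head _ (min_le_left _ _) ((min_le_right _ _).trans hNM))
          ((seminorm_sum_Ico_le p e hΓ hproj c j hNM).trans
            (mul_le_mul_of_nonneg_left tail (zero_le_one.trans hΓ)))
    _ = (D j + Γ * (1 + D j)) * p j (partialSum e c M) := by ring

end MonotoneSeminorms

theorem stmt_18_general {X : Type*} [AddCommGroup X] [Module ℝ X] [UniformSpace X]
    [IsUniformAddGroup X] [ContinuousSMul ℝ X]
    (p : SeminormFamily ℝ X ℕ) (hp : WithSeminorms p)
    (hmono : Monotone p)
    (e : ℕ → X) (hpos : ∀ n, 0 < p 0 (e n))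
    (Γ : ℝ) (hΓ : 1 ≤ Γ)
    (hproj : ∀ j L₀ L₁ : ℕ, j ≤ L₀ → L₀ < L₁ → ∀ a : ℕ → ℝ,
      p j (∑ n ∈ Icc j L₀, a n • e n) ≤ Γ * p j (∑ n ∈ Icc j L₁, a n • e n)) :
    ∀ x ∈ (Submodule.span ℝ (Set.range e)).topologicalClosure,
      ∃! a : ℕ → ℝ,
        Tendsto (fun N => ∑ n ∈ range N, a n • e n) atTop (nhds x) := by
  obtain ⟨C, hC⟩ := exists_seminorm_partialSum_le p e hmono hpos hΓ hproj
  exact fun x hx => existsUnique_tendsto_partialSum_of_mem_closure hp hpos hC hx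

/-- Fréchet basic sequence criterion: if `p_1(e_n) > 0` for all
`n` and `p_j(∑_{n=j}^{L₀} a_n e_n) ≤ Γ p_j(∑_{n=j}^{L₁} a_n e_n)` for all
`j ≤ L₀ < L₁`, then `(e_n)` is a Schauder basis of the closed span of the
`e_n`. -/
theorem stmt_18 {X : Type*} [AddCommGroup X] [Module ℝ X] [UniformSpace X]
    [IsUniformAddGroup X] [CompleteSpace X] [ContinuousSMul ℝ X]
    (p : SeminormFamily ℝ X ℕ) (hp : WithSeminorms p)
    (hmono : Monotone p) (hsep : ∀ x : X, x ≠ 0 → ∃ j, p j x ≠ 0)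
    (e : ℕ → X) (hpos : ∀ n, 0 < p 0 (e n))
    (Γ : ℝ) (hΓ : 1 ≤ Γ)
    (hproj : ∀ j L₀ L₁ : ℕ, j ≤ L₀ → L₀ < L₁ → ∀ a : ℕ → ℝ,
      p j (∑ n ∈ Icc j L₀, a n • e n) ≤ Γ * p j (∑ n ∈ Icc j L₁, a n • e n)) :
    ∀ x ∈ (Submodule.span ℝ (Set.range e)).topologicalClosure,
      ∃! a : ℕ → ℝ,
        Tendsto (fun N => ∑ n ∈ range N, a n • e n) atTop (nhds x) :=
  stmt_18_general p hp hmono e hpos Γ hΓ hproj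
end
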